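/- Under the covariate shift assumption (P^tr_{Y|X} = P^te_{Y|X} = P_{Y|X}), the expectation under the training distribution of the importance-weighted loss using projected density ratios equals the expectation of the loss under the mixed distribution P^te_U ⊗ P^tr_{V|U} ⊗ P_{Y|U,V}: that is, E_{P^tr_{X,Y}}[ (P^te_U(U)/P^tr_U(U)) · L(f(U), Y) ] = E_{P^te_U P^tr_{V|U} P_{Y|U,V}}[ L(f(U), Y) ], where U = AᵀX and V = CᵀX. -/
import Mathlib


open MeasureTheory ProbabilityTheory

lemma my_integrable_integral_compProd {α β E : Type*} [MeasurableSpace α]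
    [MeasurableSpace β] [NormedAddCommGroup E] [NormedSpace ℝ E]
    {μ : Measure α} [SFinite μ] {κ : Kernel α β} [IsSFiniteKernel κ]
    {f : α × β → E} (hf : Integrable f (μ ⊗ₘ κ)) :
    Integrable (fun x => ∫ y, f (x, y) ∂κ x) μ := by
  rw [Measure.compProd] at hf
  have h := hf.integral_compProd
  simpa using h

/-- Lemma 2 identity: under covariate shift (shared outcome kernel `ν`), the
training expectation of the importance-weighted loss using the projected
density ratio `w(u) = dP^te_U/dP^tr_U(u)` equals the expectation of the loss
under the mixed distribution `P^te_U ⊗ P^tr_{V|U} ⊗ P_{Y|U,V}`. -/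
theorem stmt_4 {U V Y : Type*} [MeasurableSpace U] [MeasurableSpace V]
    [MeasurableSpace Y]
    (μtr μte : Measure U) [IsProbabilityMeasure μtr] [IsProbabilityMeasure μte]
    (κ : Kernel U V) [IsMarkovKernel κ]
    (ν : Kernel (U × V) Y) [IsMarkovKernel ν]
    (hac : μte ≪ μtr)
    (f : U → ℝ) (L : ℝ → Y → ℝ)
    (hint : Integrable
      (fun p : (U × V) × Y =>
        (μte.rnDeriv μtr p.1.1).toReal * L (f p.1.1) p.2)
      ((μtr ⊗ₘ κ) ⊗ₘ ν))
    (hint' : Integrable (fun p : (U × V) × Y => L (f p.1.1) p.2)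
      ((μte ⊗ₘ κ) ⊗ₘ ν)) :
    ∫ p : (U × V) × Y,
        (μte.rnDeriv μtr p.1.1).toReal * L (f p.1.1) p.2 ∂((μtr ⊗ₘ κ) ⊗ₘ ν)
      = ∫ p : (U × V) × Y, L (f p.1.1) p.2 ∂((μte ⊗ₘ κ) ⊗ₘ ν) := by
  rw [Measure.integral_compProd hint, Measure.integral_compProd hint',
    Measure.integral_compProd (my_integrable_integral_compProd hint),
    Measure.integral_compProd (my_integrable_integral_compProd hint')]
  simp only [integral_const_mul]
  rw [← integral_rnDeriv_smul hac
    (f := fun u => ∫ v, ∫ y, L (f u) y ∂ν (u, v) ∂κ u)]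
  simp [smul_eq_mul]
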